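/- arXiv:1904.05495 — 8 statements merged into one kernel-verified Lean document; each statement's English description precedes it below -/
import Mathlib

section
/- Let E be a real inner product space, let A : E → Set E be a monotone operator, let λ > 0, let N ≥ 1 be an integer, and let w* ∈ E satisfy 0 ∈ A(w*). Suppose w^0, w^1, …, w^{N+1} ∈ E are proximal point iterates, i.e., for every k = 0, …, N there exists v ∈ A(w^{k+1}) with w^k − w^{k+1} = λ • v. Then ‖w^N − w^{N+1}‖² ≤ (N^N / (N+1)^{N+1}) · ‖w^0 − w*‖². (Equivalently, the ratio ‖w^N − w^{N+1}‖²/‖w^0 − w*‖² is at most 1/((1 + 1/N)^N (N+1)).) -/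
open scoped RealInnerProductSpace

/-!
Put `x k = w k - w*` and `r k = x k - x (k + 1)`. Monotonicity of `A`, tested against
`0 ∈ A w*` and between consecutive iterates, gives `⟪x (k + 1), r k⟫ ≥ 0` and
`⟪r k - r (k + 1), r (k + 1)⟫ ≥ 0`. The weighted potential `(N + 1) ^ j * V j` with
`V j = ppaPotential x N j = (N - j) ‖x (j + 1)‖² + (j + 1) (2 ⟪x (j + 1), r j⟫ + N ‖r j‖²)` grows at most by the
factor `N` per step, because `N V j - (N + 1) V (j + 1)` is a nonnegative combination of these
inner products plus a square. Identities of the same kind give `V 0 ≤ N ‖x 0‖²` and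
`(N + 1)² ‖r N‖² ≤ V (N - 1)`.
-/

def IsMonotoneOperator {E : Type*} [NormedAddCommGroup E] [InnerProductSpace ℝ E]
    (A : E → Set E) : Prop :=
  ∀ x y u v, u ∈ A x → v ∈ A y → 0 ≤ ⟪u - v, x - y⟫

theorem IsMonotoneOperator.inner_smul_sub_smul_nonneg {E : Type*} [NormedAddCommGroup E]
    [InnerProductSpace ℝ E] {A : E → Set E} (hA : IsMonotoneOperator A) {lam : ℝ}
    (hlam : 0 ≤ lam) {x y u v : E} (hu : u ∈ A x) (hv : v ∈ A y) :
    0 ≤ ⟪lam • u - lam • v, x - y⟫ := by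
  rw [← smul_sub, real_inner_smul_left]
  exact mul_nonneg hlam (hA x y u v hu hv)

section Potential

variable {E : Type*} [NormedAddCommGroup E] [InnerProductSpace ℝ E] (x : ℕ → E)

noncomputable def ppaPotential (N j : ℕ) : ℝ :=
  (N - j) * ‖x (j + 1)‖ ^ 2 +
    (j + 1) * (2 * ⟪x (j + 1), x j - x (j + 1)⟫ + N * ‖x j - x (j + 1)‖ ^ 2)

theorem ppaPotential_zero_le {N : ℕ} (hN : 1 ≤ N) (h : 0 ≤ ⟪x 1, x 0 - x 1⟫) :
    ppaPotential x N 0 ≤ N * ‖x 0‖ ^ 2 := by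
  have hdiff : N * ‖x 0‖ ^ 2 - ppaPotential x N 0 = 2 * (N - 1) * ⟪x 1, x 0 - x 1⟫ := by
    simp only [ppaPotential, ← real_inner_self_eq_norm_sq, inner_sub_left, inner_sub_right,
      real_inner_comm]
    push_cast
    ring
  have hN' : (0 : ℝ) ≤ 2 * (N - 1) := by
    have : (1 : ℝ) ≤ N := by exact_mod_cast hN
    linarith
  linarith [mul_nonneg hN' h]

theorem ppaPotential_succ_le {N j : ℕ} (hj : j + 2 ≤ N)
    (hres : 0 ≤ ⟪x j - x (j + 1) - (x (j + 1) - x (j + 2)), x (j + 1) - x (j + 2)⟫)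
    (hfix : 0 ≤ ⟪x (j + 2), x (j + 1) - x (j + 2)⟫) :
    (N + 1) * ppaPotential x N (j + 1) ≤ N * ppaPotential x N j := by
  have hdiff : N * ppaPotential x N j - (N + 1) * ppaPotential x N (j + 1) =
      2 * (j + 1) * (N + 1) * N *
          ⟪x j - x (j + 1) - (x (j + 1) - x (j + 2)), x (j + 1) - x (j + 2)⟫ +
        2 * (N - 2 - j) * (N + 1) * ⟪x (j + 2), x (j + 1) - x (j + 2)⟫ +
        (j + 1) * ‖x (j + 2) + (N : ℝ) • (x j - x (j + 1) - (x (j + 1) - x (j + 2)))‖ ^ 2 := by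
    simp only [ppaPotential, ← real_inner_self_eq_norm_sq, inner_add_left, inner_add_right,
      inner_sub_left, inner_sub_right, real_inner_smul_right, real_inner_comm]
    push_cast
    ring
  have hj' : (j : ℝ) + 2 ≤ N := by exact_mod_cast hj
  have h₁ := mul_nonneg (by positivity : (0 : ℝ) ≤ 2 * (j + 1) * (N + 1) * N) hres
  have h₂ := mul_nonneg
    (mul_nonneg (by linarith) (by positivity) : (0 : ℝ) ≤ 2 * (N - 2 - j) * (N + 1)) hfix
  have h₃ := mul_nonneg (by positivity : (0 : ℝ) ≤ j + 1)
    (sq_nonneg ‖x (j + 2) + (N : ℝ) • (x j - x (j + 1) - (x (j + 1) - x (j + 2)))‖)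
  linarith

theorem sq_norm_sub_le_ppaPotential (j : ℕ)
    (hres : 0 ≤ ⟪x j - x (j + 1) - (x (j + 1) - x (j + 2)), x (j + 1) - x (j + 2)⟫)
    (hfix : 0 ≤ ⟪x (j + 2), x (j + 1) - x (j + 2)⟫) :
    ((j : ℝ) + 2) ^ 2 * ‖x (j + 1) - x (j + 2)‖ ^ 2 ≤ ppaPotential x (j + 1) j := by
  have hdiff : ppaPotential x (j + 1) j - (j + 2) ^ 2 * ‖x (j + 1) - x (j + 2)‖ ^ 2 =
      2 * (j + 1) * (j + 2) *
          ⟪x j - x (j + 1) - (x (j + 1) - x (j + 2)), x (j + 1) - x (j + 2)⟫ +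
        2 * (j + 2) * ⟪x (j + 2), x (j + 1) - x (j + 2)⟫ +
        ‖x (j + 2) + ((j : ℝ) + 1) • (x j - x (j + 1) - (x (j + 1) - x (j + 2)))‖ ^ 2 := by
    simp only [ppaPotential, ← real_inner_self_eq_norm_sq, inner_add_left, inner_add_right,
      inner_sub_left, inner_sub_right, real_inner_smul_right, real_inner_comm]
    push_cast
    ring
  have h₁ := mul_nonneg (by positivity : (0 : ℝ) ≤ 2 * (j + 1) * (j + 2)) hres
  have h₂ := mul_nonneg (by positivity : (0 : ℝ) ≤ 2 * (j + 2)) hfix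
  linarith [sq_nonneg ‖x (j + 2) + ((j : ℝ) + 1) • (x j - x (j + 1) - (x (j + 1) - x (j + 2)))‖]

theorem pow_mul_sq_norm_sub_le {N : ℕ} (hN : 1 ≤ N)
    (hfix : ∀ k ≤ N, 0 ≤ ⟪x (k + 1), x k - x (k + 1)⟫)
    (hres : ∀ k < N,
      0 ≤ ⟪x k - x (k + 1) - (x (k + 1) - x (k + 2)), x (k + 1) - x (k + 2)⟫) :
    ((N : ℝ) + 1) ^ (N + 1) * ‖x N - x (N + 1)‖ ^ 2 ≤ (N : ℝ) ^ N * ‖x 0‖ ^ 2 := by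
  obtain ⟨M, rfl⟩ : ∃ M, N = M + 1 := ⟨N - 1, by omega⟩
  have hgeom := le_geom (u := fun j => ((M : ℝ) + 2) ^ j * ppaPotential x (M + 1) j)
      (c := (M : ℝ) + 1) (by positivity) M fun k hk => by
    have hstep := ppaPotential_succ_le x (by omega : k + 2 ≤ M + 1) (hres k (by omega))
      (hfix (k + 1) (by omega))
    have h := mul_le_mul_of_nonneg_left hstep (pow_nonneg (by positivity : (0 : ℝ) ≤ M + 2) k)
    push_cast at h ⊢
    linear_combination h
  push_cast
  calc ((M : ℝ) + 1 + 1) ^ (M + 1 + 1) * ‖x (M + 1) - x (M + 1 + 1)‖ ^ 2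
      = ((M : ℝ) + 2) ^ M * (((M : ℝ) + 2) ^ 2 * ‖x (M + 1) - x (M + 2)‖ ^ 2) := by ring
    _ ≤ ((M : ℝ) + 2) ^ M * ppaPotential x (M + 1) M := by
      gcongr
      exact sq_norm_sub_le_ppaPotential x M (hres M (by omega)) (hfix (M + 1) le_rfl)
    _ ≤ ((M : ℝ) + 1) ^ M * ppaPotential x (M + 1) 0 := by
      simpa only [pow_zero, one_mul] using hgeom
    _ ≤ ((M : ℝ) + 1) ^ M * ((M + 1 : ℕ) * ‖x 0‖ ^ 2) := by
      gcongr
      exact ppaPotential_zero_le x (by omega) (hfix 0 (by omega))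
    _ = ((M : ℝ) + 1) ^ (M + 1) * ‖x 0‖ ^ 2 := by push_cast; ring

end Potential

/-- Optimal nonergodic sublinear rate of the proximal point algorithm:
if `w 0, …, w (N+1)` are PPA iterates of a monotone operator `A` with parameter `lam > 0`,
and `0 ∈ A w*`, then `‖w N - w (N+1)‖² ≤ (N^N / (N+1)^(N+1)) * ‖w 0 - w*‖²`. -/
theorem ppa_optimal_rate
    {E : Type*} [NormedAddCommGroup E] [InnerProductSpace ℝ E]
    (A : E → Set E)
    (hA : ∀ x y u v, u ∈ A x → v ∈ A y → 0 ≤ ⟪u - v, x - y⟫)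
    (lam : ℝ) (hlam : 0 < lam)
    (N : ℕ) (hN : 1 ≤ N)
    (wstar : E) (hstar : (0 : E) ∈ A wstar)
    (w : ℕ → E)
    (hw : ∀ k ≤ N, ∃ v ∈ A (w (k + 1)), w k - w (k + 1) = lam • v) :
    ‖w N - w (N + 1)‖ ^ 2 ≤ ((N : ℝ) ^ N / ((N : ℝ) + 1) ^ (N + 1)) * ‖w 0 - wstar‖ ^ 2 := by
  have hA : IsMonotoneOperator A := hA
  have hfix : ∀ k ≤ N, 0 ≤ ⟪w (k + 1) - wstar, w k - wstar - (w (k + 1) - wstar)⟫ := by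
    intro k hk
    obtain ⟨v, hv, hkv⟩ := hw k hk
    have h := hA.inner_smul_sub_smul_nonneg hlam.le hv hstar
    rw [smul_zero, sub_zero, ← hkv, real_inner_comm] at h
    rwa [sub_sub_sub_cancel_right]
  have hres : ∀ k < N, 0 ≤ ⟪w k - wstar - (w (k + 1) - wstar) -
      ((w (k + 1) - wstar) - (w (k + 2) - wstar)), (w (k + 1) - wstar) - (w (k + 2) - wstar)⟫ := by
    intro k hk
    obtain ⟨u, hu, hku⟩ := hw k hk.le
    obtain ⟨v, hv, hkv⟩ := hw (k + 1) hk
    have h := hA.inner_smul_sub_smul_nonneg hlam.le hu hv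
    rw [← hku, ← hkv] at h
    simpa only [sub_sub_sub_cancel_right] using h
  have key := pow_mul_sq_norm_sub_le (fun k => w k - wstar) hN hfix hres
  simp only [sub_sub_sub_cancel_right] at key
  rw [div_mul_eq_mul_div, le_div_iff₀ (by positivity)]
  linarith
end

section
/- Let E be a real inner product space, let A : E → Set E be a monotone operator, let λ > 0, let N ≥ 1 be an integer, and let w* ∈ E satisfy 0 ∈ A(w*). Suppose w^0, w^1, …, w^{N+1} ∈ E satisfy: for every k = 0, …, N there exists v ∈ A(w^{k+1}) with w^k − w^{k+1} = λ • v. Then ‖w^N − w^{N+1}‖² ≤ ‖w^0 − w*‖² / (N + 1). -/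
open scoped RealInnerProductSpace

/-- Classical Brézis–Lions nonergodic bound for the proximal point algorithm:
`‖w N - w (N+1)‖² ≤ ‖w 0 - w*‖² / (N + 1)`. -/
theorem ppa_brezis_lions_rate
    {E : Type*} [NormedAddCommGroup E] [InnerProductSpace ℝ E]
    (A : E → Set E)
    (hA : ∀ x y u v, u ∈ A x → v ∈ A y → 0 ≤ ⟪u - v, x - y⟫)
    (lam : ℝ) (hlam : 0 < lam)
    (N : ℕ) (hN : 1 ≤ N)
    (wstar : E) (hstar : (0 : E) ∈ A wstar)
    (w : ℕ → E)
    (hw : ∀ k ≤ N, ∃ v ∈ A (w (k + 1)), w k - w (k + 1) = lam • v) :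
    ‖w N - w (N + 1)‖ ^ 2 ≤ ‖w 0 - wstar‖ ^ 2 / ((N : ℝ) + 1) := by
  set r : ℕ → ℝ := fun k => ‖w k - w (k + 1)‖ with hr
  -- Fejér monotonicity
  have fejer : ∀ k ≤ N, ‖w (k+1) - wstar‖ ^ 2 + r k ^ 2 ≤ ‖w k - wstar‖ ^ 2 := by
    intro k hk
    obtain ⟨v, hv, heq⟩ := hw k hk
    have hmono := hA _ _ _ _ hv hstar
    simp only [sub_zero] at hmono
    have hip : 0 ≤ ⟪w k - w (k+1), w (k+1) - wstar⟫ := by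
      rw [heq, real_inner_smul_left]
      exact mul_nonneg hlam.le hmono
    have hexp : w k - wstar = (w k - w (k+1)) + (w (k+1) - wstar) := by abel
    rw [hexp, norm_add_sq_real]
    nlinarith [hip]
  -- residuals nonincreasing
  have dec : ∀ k, k < N → r (k+1) ≤ r k := by
    intro k hk
    obtain ⟨v1, hv1, he1⟩ := hw k hk.le
    obtain ⟨v2, hv2, he2⟩ := hw (k+1) hk
    have hmono := hA _ _ _ _ hv1 hv2
    have hip : 0 ≤ ⟪(w k - w (k+1)) - (w (k+1) - w (k+2)), w (k+1) - w (k+2)⟫ := by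
      have hsub : (w k - w (k+1)) - (w (k+1) - w (k+2)) = lam • (v1 - v2) := by
        rw [he1, he2, smul_sub]
      rw [hsub, real_inner_smul_left]
      exact mul_nonneg hlam.le hmono
    rw [inner_sub_left, real_inner_self_eq_norm_sq, sub_nonneg] at hip
    have hcs := real_inner_le_norm (w k - w (k+1)) (w (k+1) - w (k+2))
    have h2 : r (k+1) ^ 2 ≤ r k * r (k+1) := by
      simp only [hr]
      calc ‖w (k+1) - w (k+1+1)‖ ^ 2 ≤ ⟪w k - w (k+1), w (k+1) - w (k+2)⟫ := hip
        _ ≤ ‖w k - w (k+1)‖ * ‖w (k+1) - w (k+2)‖ := hcs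
    nlinarith [norm_nonneg (w (k+1) - w (k+2)), norm_nonneg (w k - w (k+1))]
  -- r N ≤ r k for k ≤ N
  have rlast : ∀ j ≤ N, ∀ i ≤ j, r j ≤ r i := by
    intro j hj
    induction j with
    | zero => intro i hi; interval_cases i; exact le_refl _
    | succ j ih =>
      intro i hi
      rcases Nat.eq_or_lt_of_le hi with h | h
      · subst h; exact le_refl _
      · exact le_trans (dec j (by omega)) (ih (by omega) i (by omega))
  -- sum bound
  have sumb : ∀ m ≤ N + 1,
      (∑ k ∈ Finset.range m, r k ^ 2) + ‖w m - wstar‖ ^ 2 ≤ ‖w 0 - wstar‖ ^ 2 := by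
    intro m hm
    induction m with
    | zero => simp
    | succ m ih =>
      rw [Finset.sum_range_succ]
      have := fejer m (by omega)
      have := ih (by omega)
      linarith
  have key : ((N : ℝ) + 1) * r N ^ 2 ≤ ‖w 0 - wstar‖ ^ 2 := by
    have h1 : ((N : ℝ) + 1) * r N ^ 2 ≤ ∑ k ∈ Finset.range (N + 1), r k ^ 2 := by
      have : ((N : ℝ) + 1) * r N ^ 2 = ∑ _k ∈ Finset.range (N + 1), r N ^ 2 := by
        rw [Finset.sum_const, Finset.card_range]
        ring
      rw [this]
      apply Finset.sum_le_sum
      intro i hi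
      have hle : r N ≤ r i := rlast N le_rfl i (by simpa using Nat.lt_succ_iff.mp (Finset.mem_range.mp hi))
      have h0 : 0 ≤ r N := norm_nonneg _
      nlinarith
    have h2 := sumb (N + 1) le_rfl
    nlinarith [sq_nonneg ‖w (N+1) - wstar‖]
  have hpos : (0 : ℝ) < (N : ℝ) + 1 := by positivity
  rw [le_div_iff₀ hpos]
  calc ‖w N - w (N + 1)‖ ^ 2 * ((N : ℝ) + 1) = ((N : ℝ) + 1) * r N ^ 2 := by ring
    _ ≤ _ := key
end

section
/- Let N ≥ 1 be an integer. Work with real symmetric matrices of order N+2 and let e_1, …, e_{N+2} denote the standard unit (column) vectors of ℝ^{N+2}. For 1 ≤ i < j ≤ N+1 set ξ_{ij} = (e_i − e_{i+1}) − (e_j − e_{j+1}) and A_{i,j} = (e_{i+1} − e_{j+1})ξ_{ij}ᵀ + ξ_{ij}(e_{i+1} − e_{j+1})ᵀ; for 1 ≤ i ≤ N+1 set B_i = e_{i+1}(e_i − e_{i+1})ᵀ + (e_i − e_{i+1})e_{i+1}ᵀ; set C = (e_{N+1} − e_{N+2})(e_{N+1} − e_{N+2})ᵀ and E_{11} = e_1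 e_1ᵀ. Define multipliers λ_{i,j} = (N/(N+1))^{N−i} · i/(N+1) if j = i+1 with 1 ≤ i ≤ N, and λ_{i,j} = 0 otherwise; μ_i = (N/(N+1))^{N−i} · (N−i)/(N+1)² for 1 ≤ i ≤ N; μ_{N+1} = 1/(N+1); and η = (N/(N+1))^N · 1/(N+1). Then the matrix M = η·E_{11} − C − Σ_{1 ≤ i < j ≤ N+1} λ_{i,j}·A_{i,j} − Σ_{i=1}^{N+1} μ_i·B_i is positive semidefinite. -/
open Matrix

/-- The `k`-th standard unit vector of `ℝ^(N+2)`, with 1-based index `k ∈ {1, …, N+2}`. -/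
noncomputable def pepUnitVec (N : ℕ) (k : ℕ) : Fin (N + 2) → ℝ :=
  fun m => if (m : ℕ) + 1 = k then 1 else 0

/-- `ξ_{ij} = (e_i − e_{i+1}) − (e_j − e_{j+1})`. -/
noncomputable def pepXi (N : ℕ) (i j : ℕ) : Fin (N + 2) → ℝ :=
  (pepUnitVec N i - pepUnitVec N (i + 1)) - (pepUnitVec N j - pepUnitVec N (j + 1))

/-- `A_{i,j} = (e_{i+1} − e_{j+1})ξ_{ij}ᵀ + ξ_{ij}(e_{i+1} − e_{j+1})ᵀ`. -/
noncomputable def pepMatA (N : ℕ) (i j : ℕ) : Matrix (Fin (N + 2)) (Fin (N + 2)) ℝ :=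
  vecMulVec (pepUnitVec N (i + 1) - pepUnitVec N (j + 1)) (pepXi N i j) +
    vecMulVec (pepXi N i j) (pepUnitVec N (i + 1) - pepUnitVec N (j + 1))

/-- `B_i = e_{i+1}(e_i − e_{i+1})ᵀ + (e_i − e_{i+1})e_{i+1}ᵀ`. -/
noncomputable def pepMatB (N : ℕ) (i : ℕ) : Matrix (Fin (N + 2)) (Fin (N + 2)) ℝ :=
  vecMulVec (pepUnitVec N (i + 1)) (pepUnitVec N i - pepUnitVec N (i + 1)) +
    vecMulVec (pepUnitVec N i - pepUnitVec N (i + 1)) (pepUnitVec N (i + 1))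

/-- `C = (e_{N+1} − e_{N+2})(e_{N+1} − e_{N+2})ᵀ`. -/
noncomputable def pepMatC (N : ℕ) : Matrix (Fin (N + 2)) (Fin (N + 2)) ℝ :=
  vecMulVec (pepUnitVec N (N + 1) - pepUnitVec N (N + 2))
    (pepUnitVec N (N + 1) - pepUnitVec N (N + 2))

/-- `E_{11} = e_1 e_1ᵀ`. -/
noncomputable def pepMatE11 (N : ℕ) : Matrix (Fin (N + 2)) (Fin (N + 2)) ℝ :=
  vecMulVec (pepUnitVec N 1) (pepUnitVec N 1)

/-- Dual multipliers `λ_{i,j}`. -/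
noncomputable def pepLam (N : ℕ) (i j : ℕ) : ℝ :=
  if j = i + 1 ∧ 1 ≤ i ∧ i ≤ N then ((N : ℝ) / ((N : ℝ) + 1)) ^ (N - i) * i / ((N : ℝ) + 1)
  else 0

/-- Dual multipliers `μ_i`. -/
noncomputable def pepMu (N : ℕ) (i : ℕ) : ℝ :=
  if i = N + 1 then 1 / ((N : ℝ) + 1)
  else ((N : ℝ) / ((N : ℝ) + 1)) ^ (N - i) * ((N : ℝ) - (i : ℝ)) / ((N : ℝ) + 1) ^ 2

/-- Dual multiplier `η = (N/(N+1))^N · 1/(N+1)`. -/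
noncomputable def pepEta (N : ℕ) : ℝ :=
  ((N : ℝ) / ((N : ℝ) + 1)) ^ N * (1 / ((N : ℝ) + 1))

/-!
The slack matrix factors as `Σ_{i=1}^N c_i v_i v_iᵀ` with `c_i ≥ 0` (`pepCholCoef`, `pepCholVec`).
The factorization telescopes: subtracting from `η E₁₁`,
for `i = 1, …, N`, the constraint terms `λ_{i,i+1} A_{i,i+1} + μ_i B_i` (the only `λ`'s that are
nonzero) and the square `c_i v_i v_iᵀ` leaves at each stage a matrix supported on two consecutive
coordinates, and the last one is exactly `C + μ_{N+1} B_{N+1}`.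
-/

open Finset

noncomputable def pepCholCoef (N i : ℕ) : ℝ :=
  ((N : ℝ) / (N + 1)) ^ (N + 1 - i) * i / (N + 1)

noncomputable def pepCholVec (N i : ℕ) : Fin (N + 2) → ℝ :=
  pepUnitVec N i - (2 : ℝ) • pepUnitVec N (i + 1) + (((N : ℝ) + 1) / N) • pepUnitVec N (i + 2)

/-- `R_i = η E₁₁ − Σ_{k<i} (λ_{k,k+1} A_{k,k+1} + μ_k B_k + c_k v_k v_kᵀ)`, supported on
coordinates `i, i+1`. -/
noncomputable def pepRemainder (N i : ℕ) : Matrix (Fin (N + 2)) (Fin (N + 2)) ℝ :=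
  (((N : ℝ) / (N + 1)) ^ (N + 1 - i) / (N + 1)) •
    ((i : ℝ) • vecMulVec (pepUnitVec N i) (pepUnitVec N i) -
      ((i : ℝ) - 1) • (vecMulVec (pepUnitVec N i) (pepUnitVec N (i + 1)) +
        vecMulVec (pepUnitVec N (i + 1)) (pepUnitVec N i)) +
      (((i : ℝ) - 1) * (N - 1) / N) • vecMulVec (pepUnitVec N (i + 1)) (pepUnitVec N (i + 1)))

lemma pepRemainder_one (N : ℕ) : pepRemainder N 1 = pepEta N • pepMatE11 N := by
  simp [pepRemainder, pepEta, pepMatE11, div_eq_mul_inv]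

lemma pepRemainder_succ_self {N : ℕ} (hN : N ≠ 0) :
    pepRemainder N (N + 1) = pepMatC N + pepMu N (N + 1) • pepMatB N (N + 1) := by
  simp only [pepRemainder, pepMatC, pepMatB, pepMu, if_pos, Nat.sub_self, pow_zero]
  simp only [vecMulVec_sub, sub_vecMulVec, smul_add, smul_sub]
  match_scalars <;> field_simp <;> ring

lemma pepRemainder_sub_succ {N i : ℕ} (hi : 1 ≤ i) (hiN : i ≤ N) :
    pepRemainder N i - pepRemainder N (i + 1) =
      pepLam N i (i + 1) • pepMatA N i (i + 1) + pepMu N i • pepMatB N i +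
        pepCholCoef N i • vecMulVec (pepCholVec N i) (pepCholVec N i) := by
  obtain ⟨m, rfl⟩ := Nat.exists_eq_add_of_le hiN
  have hN : (i : ℝ) + m ≠ 0 := by positivity
  rw [pepLam, if_pos ⟨rfl, hi, hiN⟩, pepMu, if_neg (by omega)]
  simp only [pepRemainder, pepCholCoef, pepCholVec, pepMatA, pepMatB, pepXi, div_pow,
    show i + m + 1 - i = m + 1 by omega, show i + m + 1 - (i + 1) = m by omega,
    show i + m - i = m by omega, show i + 1 + 1 = i + 2 by omega]
  simp only [vecMulVec_add, add_vecMulVec, vecMulVec_sub, sub_vecMulVec, vecMulVec_smul,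
    smul_vecMulVec, smul_add, smul_sub]
  push_cast
  match_scalars <;> field_simp <;> ring

lemma sum_pepLam_smul_pepMatA (N : ℕ) :
    ∑ i ∈ Icc 1 (N + 1), ∑ j ∈ Ioc i (N + 1), pepLam N i j • pepMatA N i j =
      ∑ i ∈ Icc 1 N, pepLam N i (i + 1) • pepMatA N i (i + 1) := by
  rw [sum_Icc_succ_top (by omega), Ioc_self, sum_empty, add_zero]
  refine sum_congr rfl fun i hi => sum_eq_single_of_mem (i + 1) ?_ fun j _ hj => ?_
  · simp only [mem_Icc, mem_Ioc] at hi ⊢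
    omega
  · rw [pepLam, if_neg fun h => hj h.1, zero_smul]

lemma pep_dual_slack_eq_sum {N : ℕ} (hN : N ≠ 0) :
    pepEta N • pepMatE11 N - pepMatC N -
      (∑ i ∈ Icc 1 (N + 1), ∑ j ∈ Ioc i (N + 1), pepLam N i j • pepMatA N i j) -
      (∑ i ∈ Icc 1 (N + 1), pepMu N i • pepMatB N i) =
      ∑ i ∈ Icc 1 N, pepCholCoef N i • vecMulVec (pepCholVec N i) (pepCholVec N i) := by
  have htel : ∑ i ∈ Icc 1 N, (pepRemainder N i - pepRemainder N (i + 1)) =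
      pepRemainder N 1 - pepRemainder N (N + 1) := by
    simpa only [neg_sub_neg] using sum_Icc_sub (by omega) fun i => -pepRemainder N i
  rw [sum_congr rfl fun i hi => pepRemainder_sub_succ (mem_Icc.1 hi).1 (mem_Icc.1 hi).2,
    sum_add_distrib, sum_add_distrib, pepRemainder_one, pepRemainder_succ_self hN] at htel
  rw [sum_pepLam_smul_pepMatA, sum_Icc_succ_top (by omega : 1 ≤ N + 1)]
  linear_combination (norm := abel) -htel

/-- Proposition 1: the dual slack matrix
`M = η·E₁₁ − C − Σ_{1≤i<j≤N+1} λ_{i,j}·A_{i,j} − Σ_{i=1}^{N+1} μ_i·B_i`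
is positive semidefinite. -/
theorem pep_dual_slack_posSemidef (N : ℕ) (hN : 1 ≤ N) :
    (pepEta N • pepMatE11 N - pepMatC N -
      (∑ i ∈ Finset.Icc 1 (N + 1), ∑ j ∈ Finset.Ioc i (N + 1), pepLam N i j • pepMatA N i j) -
      (∑ i ∈ Finset.Icc 1 (N + 1), pepMu N i • pepMatB N i)).PosSemidef := by
  rw [pep_dual_slack_eq_sum (by omega)]
  refine posSemidef_sum _ fun i _ => PosSemidef.smul ?_ (by unfold pepCholCoef; positivity)
  simpa using posSemidef_vecMulVec_self_star (pepCholVec N i)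
end

section
/- Let N ≥ 1 be an integer and let e_1, …, e_{N+2} denote the standard unit (column) vectors of ℝ^{N+2}. For 1 ≤ i < j ≤ N+1 set ξ_{ij} = (e_i − e_{i+1}) − (e_j − e_{j+1}) and A_{i,j} = (e_{i+1} − e_{j+1})ξ_{ij}ᵀ + ξ_{ij}(e_{i+1} − e_{j+1})ᵀ; for 1 ≤ i ≤ N+1 set B_i = e_{i+1}(e_i − e_{i+1})ᵀ + (e_i − e_{i+1})e_{i+1}ᵀ; set C = (e_{N+1} − e_{N+2})(e_{N+1} − e_{N+2})ᵀ. If X is a real symmetric positive semidefinite matrix of order N+2 satisfying trace(A_{i,j}·X) ≥ 0 for all 1 ≤ i < j ≤ N+1, trace(B_i·X) ≥ 0 for all 1 ≤ i ≤ N+1, and X_{1,1} = 1, then trace(C·X) ≤ N^N/(N+1)^{N+1}. -/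
open Matrix

/-!
Put `r = N/(N+1)` and, for symmetric `X`,
`Φ_m(x, y) = ((m+1) xᵀXx − 2m xᵀXy + m(N−1)/N yᵀXy) / (N+1)`.
Along `u_m = Φ_m(e_{m+1}, e_{m+2})` the difference `r u_m − u_{m+1}` is a nonnegative combination
of `⟨A_{m+1,m+2}, X⟩`, `⟨B_{m+1}, X⟩` and `vᵀXv` with `v = r e_{m+1} − 2r e_{m+2} + e_{m+3}`
(these multipliers are the dual feasible solution), so `u_N ≤ r^N u_0 = r^N X₁₁/(N+1)`.
Finally `u_N − ⟨C, X⟩` is a positive multiple of `⟨B_{N+1}, X⟩`.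
-/

section SymmetricForm

variable {n R : Type*} [Fintype n] [CommSemiring R] {X : Matrix n n R}

theorem Matrix.trace_vecMulVec_mul (a b : n → R) (X : Matrix n n R) :
    (vecMulVec a b * X).trace = b ⬝ᵥ X *ᵥ a := by
  rw [vecMulVec_mul, trace_vecMulVec, dotProduct_comm, dotProduct_mulVec]

theorem Matrix.IsSymm.dotProduct_mulVec_comm (hX : X.IsSymm) (a b : n → R) :
    a ⬝ᵥ X *ᵥ b = b ⬝ᵥ X *ᵥ a := by
  rw [dotProduct_mulVec, ← mulVec_transpose, hX.eq, dotProduct_comm]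

theorem Matrix.IsSymm.trace_vecMulVec_add_vecMulVec_mul (hX : X.IsSymm) (a b : n → R) :
    ((vecMulVec a b + vecMulVec b a) * X).trace = 2 * (a ⬝ᵥ X *ᵥ b) := by
  rw [add_mul, trace_add, trace_vecMulVec_mul, trace_vecMulVec_mul, hX.dotProduct_mulVec_comm b,
    two_mul]

end SymmetricForm

section Potential

variable {n : Type*} [Fintype n] {X : Matrix n n ℝ}

noncomputable def pepPotential (N m : ℕ) (X : Matrix n n ℝ) (x y : n → ℝ) : ℝ :=
  ((m + 1) * (x ⬝ᵥ X *ᵥ x) - 2 * m * (x ⬝ᵥ X *ᵥ y) + m * (N - 1) / N * (y ⬝ᵥ X *ᵥ y)) / (N + 1)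

theorem pepPotential_zero (N : ℕ) (x y : n → ℝ) :
    pepPotential N 0 X x y = (x ⬝ᵥ X *ᵥ x) / (N + 1) := by
  simp [pepPotential]

theorem Matrix.IsSymm.pepPotential_step_eq (hX : X.IsSymm) {N : ℕ} (hN : N ≠ 0) (m : ℕ)
    (x y z : n → ℝ) :
    let r : ℝ := N / (N + 1)
    let v := r • x - (2 * r) • y + z
    r * pepPotential N m X x y - pepPotential N (m + 1) X y z =
      (m + 1) / (N + 1) * (2 * ((y - z) ⬝ᵥ X *ᵥ ((x - y) - (y - z))))
        + (N - 1 - m) / (N + 1) ^ 2 * (2 * (y ⬝ᵥ X *ᵥ (x - y)))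
        + (m + 1) / N * (v ⬝ᵥ X *ᵥ v) := by
  intro r v
  simp only [pepPotential, v, r, mulVec_add, mulVec_sub, mulVec_smul, dotProduct_add,
    dotProduct_sub, add_dotProduct, sub_dotProduct, dotProduct_smul, smul_dotProduct, smul_eq_mul,
    hX.dotProduct_mulVec_comm y x, hX.dotProduct_mulVec_comm z x, hX.dotProduct_mulVec_comm z y]
  push_cast
  field_simp
  ring

theorem Matrix.PosSemidef.pepPotential_succ_le (hX : X.PosSemidef) (hXs : X.IsSymm) {N m : ℕ}
    (hm : m < N) (x y z : n → ℝ) (hA : 0 ≤ (y - z) ⬝ᵥ X *ᵥ ((x - y) - (y - z)))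
    (hB : 0 ≤ y ⬝ᵥ X *ᵥ (x - y)) :
    pepPotential N (m + 1) X y z ≤ N / (N + 1) * pepPotential N m X x y := by
  have hmN : (m : ℝ) + 1 ≤ N := by exact_mod_cast hm
  have hv := hX.dotProduct_mulVec_nonneg ((N / (N + 1) : ℝ) • x - (2 * (N / (N + 1) : ℝ)) • y + z)
  rw [star_trivial] at hv
  have key := hXs.pepPotential_step_eq (N := N) (by omega) m x y z
  dsimp only at key
  have hcoeff : 0 ≤ (N - 1 - m : ℝ) / (N + 1) ^ 2 := div_nonneg (by linarith) (by positivity)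
  linarith [mul_nonneg (by positivity : (0 : ℝ) ≤ (m + 1) / (N + 1)) hA,
    mul_nonneg hcoeff hB, mul_nonneg (by positivity : (0 : ℝ) ≤ (m + 1) / N) hv]

theorem Matrix.IsSymm.sub_dotProduct_mulVec_sub_le_pepPotential (hX : X.IsSymm) {N : ℕ}
    (hN : N ≠ 0) (x y : n → ℝ) (hB : 0 ≤ y ⬝ᵥ X *ᵥ (x - y)) :
    (x - y) ⬝ᵥ X *ᵥ (x - y) ≤ pepPotential N N X x y := by
  have key : pepPotential N N X x y - (x - y) ⬝ᵥ X *ᵥ (x - y) =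
      2 / (N + 1) * (y ⬝ᵥ X *ᵥ (x - y)) := by
    simp only [pepPotential, mulVec_sub, dotProduct_sub, sub_dotProduct,
      hX.dotProduct_mulVec_comm y x]
    field_simp
    ring
  linarith [mul_nonneg (by positivity : (0 : ℝ) ≤ 2 / (N + 1)) hB]

end Potential

section Certificate

variable {N : ℕ} {X : Matrix (Fin (N + 2)) (Fin (N + 2)) ℝ}

theorem pepUnitVec_one_dotProduct_mulVec :
    pepUnitVec N 1 ⬝ᵥ X *ᵥ pepUnitVec N 1 = X 0 0 := by
  have : pepUnitVec N 1 = Pi.single 0 1 := by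
    ext m
    simp only [pepUnitVec, Pi.single_apply, Nat.add_eq_right, Fin.ext_iff, Fin.val_zero]
  simp [this]

theorem Matrix.IsSymm.dotProduct_mulVec_pepXi_nonneg (hX : X.IsSymm) {i j : ℕ}
    (h : 0 ≤ (pepMatA N i j * X).trace) :
    0 ≤ (pepUnitVec N (i + 1) - pepUnitVec N (j + 1)) ⬝ᵥ X *ᵥ pepXi N i j := by
  rw [pepMatA, hX.trace_vecMulVec_add_vecMulVec_mul] at h
  linarith

theorem Matrix.IsSymm.dotProduct_mulVec_pepUnitVec_sub_nonneg (hX : X.IsSymm) {i : ℕ}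
    (h : 0 ≤ (pepMatB N i * X).trace) :
    0 ≤ pepUnitVec N (i + 1) ⬝ᵥ X *ᵥ (pepUnitVec N i - pepUnitVec N (i + 1)) := by
  rw [pepMatB, hX.trace_vecMulVec_add_vecMulVec_mul] at h
  linarith

end Certificate

/-- Optimal value bound for the SDP reformulation of the performance estimation
problem of the proximal point algorithm: any feasible `X` satisfies
`trace(C·X) ≤ N^N/(N+1)^(N+1)`. -/
theorem pep_sdp_optimal_value_bound (N : ℕ) (hN : 1 ≤ N)
    (X : Matrix (Fin (N + 2)) (Fin (N + 2)) ℝ)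
    (hXsymm : X.IsSymm) (hXpsd : X.PosSemidef)
    (hXA : ∀ i j : ℕ, 1 ≤ i → i < j → j ≤ N + 1 → 0 ≤ (pepMatA N i j * X).trace)
    (hXB : ∀ i : ℕ, 1 ≤ i → i ≤ N + 1 → 0 ≤ (pepMatB N i * X).trace)
    (hX11 : X 0 0 = 1) :
    (pepMatC N * X).trace ≤ (N : ℝ) ^ N / ((N : ℝ) + 1) ^ (N + 1) := by
  set e := pepUnitVec N
  set u : ℕ → ℝ := fun k ↦ pepPotential N k X (e (k + 1)) (e (k + 2))
  have step : ∀ k < N, u (k + 1) ≤ N / (N + 1) * u k := fun k hk ↦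
    hXpsd.pepPotential_succ_le hXsymm hk _ _ _
      (hXsymm.dotProduct_mulVec_pepXi_nonneg (hXA (k + 1) (k + 2) (by omega) (by omega) (by omega)))
      (hXsymm.dotProduct_mulVec_pepUnitVec_sub_nonneg (hXB (k + 1) (by omega) (by omega)))
  have base : u 0 = 1 / (N + 1) := by
    simp only [u, zero_add, pepPotential_zero, e, pepUnitVec_one_dotProduct_mulVec, hX11]
  calc (pepMatC N * X).trace = (e (N + 1) - e (N + 2)) ⬝ᵥ X *ᵥ (e (N + 1) - e (N + 2)) :=
        trace_vecMulVec_mul _ _ _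
    _ ≤ u N := hXsymm.sub_dotProduct_mulVec_sub_le_pepPotential (by omega) _ _
        (hXsymm.dotProduct_mulVec_pepUnitVec_sub_nonneg (hXB (N + 1) (by omega) le_rfl))
    _ ≤ (N / (N + 1)) ^ N * u 0 := le_geom (by positivity) N step
    _ = (N : ℝ) ^ N / ((N : ℝ) + 1) ^ (N + 1) := by
        rw [base, div_pow, pow_succ]
        field_simp
end

section
/- Let θ ∈ (0, π/2), let β = cos θ, and let Θ be the 2×2 rotation matrix with rows (cos θ, −sin θ) and (sin θ, cos θ). Let w^0 = (1, 0) ∈ ℝ², and for k ≥ 1 define w^k = β^k · Θ^k w^0 and u^k = w^{k−1} − w^k. Then for all integers 1 ≤ i < j, ⟨w^j − w^i, u^j − u^i⟩ = 0, where ⟨·,·⟩ is the standard Euclidean inner product on ℝ². -/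
open Matrix

/-- In the worst-case example `w^k = β^k Θ^k w^0`, `u^k = w^{k-1} − w^k`,
the pairs `(w^k, u^k)` satisfy `⟨w^j − w^i, u^j − u^i⟩ = 0` for `1 ≤ i < j`. -/
theorem example_orthogonality_pairs
    (θ : ℝ) (hθ₀ : 0 < θ) (hθ₁ : θ < Real.pi / 2)
    (β : ℝ) (hβ : β = Real.cos θ)
    (Θ : Matrix (Fin 2) (Fin 2) ℝ)
    (hΘ : Θ = !![Real.cos θ, -Real.sin θ; Real.sin θ, Real.cos θ])
    (w : ℕ → Fin 2 → ℝ)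
    (hw : ∀ k : ℕ, w k = β ^ k • (Θ ^ k).mulVec ![1, 0])
    (u : ℕ → Fin 2 → ℝ)
    (hu : ∀ k : ℕ, 1 ≤ k → u k = w (k - 1) - w k) :
    ∀ i j : ℕ, 1 ≤ i → i < j → (w j - w i) ⬝ᵥ (u j - u i) = 0 := by
  have key : ∀ k : ℕ, (Θ ^ k).mulVec ![1, 0] = ![Real.cos (k * θ), Real.sin (k * θ)] := by
    intro k
    induction k with
    | zero => simp
    | succ n ih =>
      rw [pow_succ', ← Matrix.mulVec_mulVec, ih]
      funext x
      fin_cases x <;>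
        simp [hΘ, Matrix.mulVec, dotProduct, Fin.sum_univ_two, Nat.cast_succ,
          add_mul, one_mul, Real.cos_add, Real.sin_add] <;> ring
  have hw' : ∀ k : ℕ, w k = ![β ^ k * Real.cos (k * θ), β ^ k * Real.sin (k * θ)] := by
    intro k
    rw [hw k, key k]
    funext x
    fin_cases x <;> simp
  intro i j hi hij
  obtain ⟨p, rfl⟩ : ∃ p, i = p + 1 := ⟨i - 1, (Nat.succ_pred_eq_of_pos hi).symm⟩
  obtain ⟨q, rfl⟩ : ∃ q, j = q + 1 := ⟨j - 1, (Nat.succ_pred_eq_of_pos (by omega)).symm⟩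
  rw [hu (q + 1) (by omega), hu (p + 1) (by omega)]
  simp only [Nat.add_sub_cancel]
  rw [hw' p, hw' q, hw' (p + 1), hw' (q + 1)]
  have hpyth : Real.cos θ ^ 2 + Real.sin θ ^ 2 = 1 := Real.cos_sq_add_sin_sq θ
  have hcp : Real.cos ((p + 1 : ℕ) * θ) =
      Real.cos (p * θ) * Real.cos θ - Real.sin (p * θ) * Real.sin θ := by
    push_cast; rw [add_mul, one_mul, Real.cos_add]
  have hsp : Real.sin ((p + 1 : ℕ) * θ) =
      Real.sin (p * θ) * Real.cos θ + Real.cos (p * θ) * Real.sin θ := by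
    push_cast; rw [add_mul, one_mul, Real.sin_add]
  have hcq : Real.cos ((q + 1 : ℕ) * θ) =
      Real.cos (q * θ) * Real.cos θ - Real.sin (q * θ) * Real.sin θ := by
    push_cast; rw [add_mul, one_mul, Real.cos_add]
  have hsq : Real.sin ((q + 1 : ℕ) * θ) =
      Real.sin (q * θ) * Real.cos θ + Real.cos (q * θ) * Real.sin θ := by
    push_cast; rw [add_mul, one_mul, Real.sin_add]
  simp only [dotProduct, Fin.sum_univ_two, Pi.sub_apply, Matrix.cons_val_zero,
    Matrix.cons_val_one, Matrix.head_cons, hcp, hsp, hcq, hsq, hβ, pow_succ]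
  set c := Real.cos θ
  set s := Real.sin θ
  set cp := Real.cos (p * θ)
  set sp := Real.sin (p * θ)
  set cq := Real.cos (q * θ)
  set sq := Real.sin (q * θ)
  set bp := c ^ p
  set bq := c ^ q
  linear_combination (-c^2*sq^2*bq^2 - c^2*cq^2*bq^2 + 2*c^2*sp*sq*bp*bq - c^2*sp^2*bp^2
    + 2*c^2*cp*cq*bp*bq - c^2*cp^2*bp^2) * hpyth
end

section
/- Let θ ∈ (0, π/2), let β = cos θ, and let Θ be the 2×2 rotation matrix with rows (cos θ, −sin θ) and (sin θ, cos θ). Let w^0 = (1, 0) ∈ ℝ², and for k ≥ 1 define w^k = β^k · Θ^k w^0 and u^k = w^{k−1} − w^k. Then for every integer i ≥ 1, ⟨w^i, u^i⟩ = 0, where ⟨·,·⟩ is the standard Euclidean inner product on ℝ². -/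
open Matrix

lemma rot_pow_aux (θ : ℝ) (k : ℕ) :
    (!![Real.cos θ, -Real.sin θ; Real.sin θ, Real.cos θ] : Matrix (Fin 2) (Fin 2) ℝ) ^ k
      = !![Real.cos (k*θ), -Real.sin (k*θ); Real.sin (k*θ), Real.cos (k*θ)] := by
  induction k with
  | zero => simp [Matrix.one_fin_two]
  | succ n ih =>
    rw [pow_succ, ih, Matrix.mul_fin_two]
    push_cast
    rw [add_mul, one_mul, Real.cos_add, Real.sin_add]
    congr 1 <;> ring

/-- In the worst-case example `w^k = β^k Θ^k w^0`, `u^k = w^{k-1} − w^k`,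
each pair satisfies `⟨w^i, u^i⟩ = 0` for `i ≥ 1`. -/
theorem example_orthogonality_self
    (θ : ℝ) (hθ₀ : 0 < θ) (hθ₁ : θ < Real.pi / 2)
    (β : ℝ) (hβ : β = Real.cos θ)
    (Θ : Matrix (Fin 2) (Fin 2) ℝ)
    (hΘ : Θ = !![Real.cos θ, -Real.sin θ; Real.sin θ, Real.cos θ])
    (w : ℕ → Fin 2 → ℝ)
    (hw : ∀ k : ℕ, w k = β ^ k • (Θ ^ k).mulVec ![1, 0])
    (u : ℕ → Fin 2 → ℝ)
    (hu : ∀ k : ℕ, 1 ≤ k → u k = w (k - 1) - w k) :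
    ∀ i : ℕ, 1 ≤ i → w i ⬝ᵥ u i = 0 := by
  intro i hi
  obtain ⟨n, rfl⟩ := Nat.exists_eq_add_of_le hi
  rw [hu _ hi]
  have hwv : ∀ k : ℕ, w k = fun j =>
      β ^ k * (![Real.cos (k*θ), Real.sin (k*θ)] j) := by
    intro k
    rw [hw k, hΘ, rot_pow_aux]
    funext j
    fin_cases j <;>
      simp [Matrix.mulVec, dotProduct, Fin.sum_univ_two]
  simp only [hwv, Nat.add_sub_cancel_left, Nat.add_sub_cancel]
  have h1 : (1 : ℕ) + n - 1 = n := by omega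
  simp only [h1, dotProduct, Fin.sum_univ_two, Pi.sub_apply,
    Matrix.cons_val_zero, Matrix.cons_val_one, Matrix.head_cons]
  push_cast
  have key : Real.cos ((1+n)*θ) * Real.cos (n*θ) + Real.sin ((1+n)*θ) * Real.sin (n*θ)
      = Real.cos θ := by
    rw [← Real.cos_sub]; ring_nf
  have sq : Real.cos ((1+n)*θ)^2 + Real.sin ((1+n)*θ)^2 = 1 :=
    Real.cos_sq_add_sin_sq _
  subst hβ
  linear_combination (Real.cos θ)^(1+n) * (Real.cos θ)^n * key
    - (Real.cos θ)^(1+n) * (Real.cos θ)^(1+n) * sq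
end

section
/- Let θ ∈ (0, π/2), let β = cos θ, and let Θ be the 2×2 rotation matrix with rows (cos θ, −sin θ) and (sin θ, cos θ). Let w^0 = (1, 0) ∈ ℝ², and for k ≥ 1 define w^k = β^k · Θ^k w^0. Then for every integer N ≥ 0, ‖w^N − w^{N+1}‖² = β^{2N}(1 − β²), where ‖·‖ is the standard Euclidean norm on ℝ². -/
open Matrix

lemma rot_pow (θ : ℝ) (k : ℕ) :
    (!![Real.cos θ, -Real.sin θ; Real.sin θ, Real.cos θ] : Matrix (Fin 2) (Fin 2) ℝ) ^ k
      = !![Real.cos (k * θ), -Real.sin (k * θ); Real.sin (k * θ), Real.cos (k * θ)] := by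
  induction k with
  | zero => simp [Matrix.one_fin_two]
  | succ n ih =>
    rw [pow_succ, ih]
    have : ((n : ℝ) + 1) * θ = n * θ + θ := by ring
    rw [Matrix.mul_fin_two]
    push_cast
    rw [this, Real.cos_add, Real.sin_add]
    congr 1 <;> ring

/-- The squared fixed-point residual of the worst-case example:
`‖w^N − w^{N+1}‖² = β^{2N}(1 − β²)` in the Euclidean norm on `ℝ²`. -/
theorem example_residual_value
    (θ : ℝ) (hθ₀ : 0 < θ) (hθ₁ : θ < Real.pi / 2)
    (β : ℝ) (hβ : β = Real.cos θ)
    (Θ : Matrix (Fin 2) (Fin 2) ℝ)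
    (hΘ : Θ = !![Real.cos θ, -Real.sin θ; Real.sin θ, Real.cos θ])
    (w : ℕ → EuclideanSpace ℝ (Fin 2))
    (hw : ∀ k : ℕ, w k = (WithLp.equiv 2 (Fin 2 → ℝ)).symm (β ^ k • (Θ ^ k).mulVec ![1, 0])) :
    ∀ N : ℕ, ‖w N - w (N + 1)‖ ^ 2 = β ^ (2 * N) * (1 - β ^ 2) := by
  intro N
  have hcoord : ∀ i, (w N - w (N + 1)) i =
      β ^ N * (Θ ^ N).mulVec ![1, 0] i - β ^ (N + 1) * (Θ ^ (N + 1)).mulVec ![1, 0] i := by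
    intro i
    simp only [hw]; rfl
  have hsq : ‖w N - w (N + 1)‖ ^ 2 = ∑ i, ((w N - w (N + 1)) i) ^ 2 := by
    rw [EuclideanSpace.norm_eq, Real.sq_sqrt (by positivity)]
    simp [sq_abs]
  rw [hsq, Fin.sum_univ_two, hcoord 0, hcoord 1]
  rw [hΘ, rot_pow, rot_pow]
  have h0 : (!![Real.cos ((N:ℝ) * θ), -Real.sin ((N:ℝ) * θ); Real.sin ((N:ℝ) * θ),
      Real.cos ((N:ℝ) * θ)]).mulVec ![1, 0] = ![Real.cos ((N:ℝ) * θ), Real.sin ((N:ℝ) * θ)] := by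
    funext i; fin_cases i <;> simp [Matrix.mulVec, dotProduct]
  have h1 : (!![Real.cos (((N:ℝ)+1) * θ), -Real.sin (((N:ℝ)+1) * θ); Real.sin (((N:ℝ)+1) * θ),
      Real.cos (((N:ℝ)+1) * θ)]).mulVec ![1, 0]
      = ![Real.cos (((N:ℝ)+1) * θ), Real.sin (((N:ℝ)+1) * θ)] := by
    funext i; fin_cases i <;> simp [Matrix.mulVec, dotProduct]
  push_cast
  rw [h0, h1]
  have e1 : ((N:ℝ)+1) * θ = N * θ + θ := by ring
  have p1 : Real.cos ((N:ℝ) * θ) ^ 2 + Real.sin ((N:ℝ) * θ) ^ 2 = 1 := Real.cos_sq_add_sin_sq _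
  have p2 : Real.cos ((N:ℝ) * θ + θ) ^ 2 + Real.sin ((N:ℝ) * θ + θ) ^ 2 = 1 :=
    Real.cos_sq_add_sin_sq _
  simp only [e1]
  rw [Real.cos_add, Real.sin_add] at p2 ⊢
  rw [hβ, pow_mul]
  simp only [Matrix.cons_val_zero, Matrix.cons_val_one, Matrix.head_cons]
  linear_combination (Real.cos θ ^ N) ^ 2 *
    ((1 - 2 * Real.cos θ ^ 2) * p1 + Real.cos θ ^ 2 * p2)
end

section
/- Let E be a real inner product space and let w^0, w^1, …, w^{N+1} ∈ E (with N ≥ 1) and w* = 0 be points satisfying the interpolation inequalities: ⟨w^i − w^j, (w^{i−1} − w^i) − (w^{j−1} − w^j)⟩ ≥ 0 for all 1 ≤ i < j ≤ N+1, and ⟨w^i, w^{i−1} − w^i⟩ ≥ 0 for all 1 ≤ i ≤ N+1, together with ‖w^0‖ = 1. Then ‖w^N − w^{N+1}‖² ≤ N^N/(N+1)^{N+1}. -/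
open scoped RealInnerProductSpace

theorem key_step {E : Type*} [NormedAddCommGroup E] [InnerProductSpace ℝ E]
    (x y z : E) (a b c a' b' c' l mu s : ℝ)
    (hl : l = 2*s*a) (hb : 2*b + 4*a = l + mu)
    (ha' : a' = c + 2*l + mu - 4*a) (hb' : b' = -(s*a)) (hc' : c' = l - s^2*a) :
    a' * ‖y‖^2 + 2*b' * ⟪y, z⟫ + c' * ‖z‖^2
      + l * ⟪y - z, (x - y) - (y - z)⟫ + mu * ⟪y, x - y⟫
      + a * ‖x - (2:ℝ) • y + s • z‖^2
    = a * ‖x‖^2 + 2*b * ⟪x, y⟫ + c * ‖y‖^2 := by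
  have hbv : b = (l + mu - 4*a)/2 := by linarith
  subst ha' hb' hc' hl hbv
  simp only [← real_inner_self_eq_norm_sq, inner_sub_left, inner_sub_right,
    inner_add_left, inner_add_right, real_inner_smul_left, real_inner_smul_right]
  rw [real_inner_comm y x, real_inner_comm z x, real_inner_comm z y]
  ring

/-- From the monotone interpolation inequalities (with `w* = 0`) and `‖w⁰‖ = 1`,
the squared fixed-point residual satisfies the optimal bound `N^N/(N+1)^{N+1}`. -/
theorem interpolation_implies_optimal_bound
    {E : Type*} [NormedAddCommGroup E] [InnerProductSpace ℝ E]
    (N : ℕ) (hN : 1 ≤ N) (w : ℕ → E)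
    (h1 : ∀ i j : ℕ, 1 ≤ i → i < j → j ≤ N + 1 →
      0 ≤ ⟪w i - w j, (w (i - 1) - w i) - (w (j - 1) - w j)⟫)
    (h2 : ∀ i : ℕ, 1 ≤ i → i ≤ N + 1 → 0 ≤ ⟪w i, w (i - 1) - w i⟫)
    (h0 : ‖w 0‖ = 1) :
    ‖w N - w (N + 1)‖ ^ 2 ≤ (N : ℝ) ^ N / ((N : ℝ) + 1) ^ (N + 1) := by
  have hN1 : (1:ℝ) ≤ (N:ℝ) := by exact_mod_cast hN
  have hNpos : (0:ℝ) < (N:ℝ) := by linarith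
  have hN0 : (N:ℝ) ≠ 0 := ne_of_gt hNpos
  have hN1pos : (0:ℝ) < (N:ℝ)+1 := by linarith
  have hN10 : (N:ℝ)+1 ≠ 0 := ne_of_gt hN1pos
  set A : ℕ → ℝ := fun m => ((m:ℝ)+1) * (N:ℝ)^(N-m) / ((N:ℝ)+1)^(N-m+1) with hA
  set B : ℕ → ℝ := fun m => -((m:ℝ) * (N:ℝ)^(N-m) / ((N:ℝ)+1)^(N-m+1)) with hB
  set C : ℕ → ℝ := fun m =>
    (m:ℝ)*((N:ℝ)^2-1) * (N:ℝ)^(N-m) / ((N:ℝ) * ((N:ℝ)+1)^(N-m+2)) with hC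
  set T : ℕ → ℝ := fun m =>
    A m * ‖w m‖^2 + 2 * B m * ⟪w m, w (m+1)⟫ + C m * ‖w (m+1)‖^2 with hT
  have step : ∀ m : ℕ, m < N → T (m+1) ≤ T m := by
    intro m hm
    have hksucc : N - m = (N - (m+1)) + 1 := by omega
    set k := N - (m+1) with hkdef
    have hkc : (k:ℝ) = (N:ℝ) - (m:ℝ) - 1 := by
      rw [hkdef, Nat.cast_sub (by omega : m+1 ≤ N)]; push_cast; ring
    have hNk : (0:ℝ) < (N:ℝ)^k := pow_pos hNpos k
    have hN1k : (0:ℝ) < ((N:ℝ)+1)^k := pow_pos hN1pos k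
    set l : ℝ := 2*((m:ℝ)+1) * (N:ℝ)^k / ((N:ℝ)+1)^(k+1) with hl
    set mu : ℝ := 2*(k:ℝ) * (N:ℝ)^k / ((N:ℝ)+1)^(k+2) with hmu
    set s : ℝ := ((N:ℝ)+1)/(N:ℝ) with hs
    have hAm : A m = ((m:ℝ)+1) * (N:ℝ)^(k+1) / ((N:ℝ)+1)^(k+2) := by
      rw [hA]; simp only [hksucc]
    have hBm : B m = -((m:ℝ) * (N:ℝ)^(k+1) / ((N:ℝ)+1)^(k+2)) := by
      rw [hB]; simp only [hksucc]
    have hCm : C m = (m:ℝ)*((N:ℝ)^2-1) * (N:ℝ)^(k+1) / ((N:ℝ) * ((N:ℝ)+1)^(k+3)) := by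
      rw [hC]; simp only [hksucc]
    have hAm1 : A (m+1) = ((m:ℝ)+2) * (N:ℝ)^k / ((N:ℝ)+1)^(k+1) := by
      rw [hA]; simp only [← hkdef]; push_cast; ring_nf
    have hBm1 : B (m+1) = -(((m:ℝ)+1) * (N:ℝ)^k / ((N:ℝ)+1)^(k+1)) := by
      rw [hB]; simp only [← hkdef]; push_cast; ring_nf
    have hCm1 : C (m+1) = ((m:ℝ)+1)*((N:ℝ)^2-1) * (N:ℝ)^k / ((N:ℝ) * ((N:ℝ)+1)^(k+2)) := by
      rw [hC]; simp only [← hkdef]; push_cast; ring_nf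
    have e1 : l = 2*s*(A m) := by
      rw [hl, hs, hAm, pow_succ, pow_succ]; field_simp; ring
    have e2 : 2*(B m) + 4*(A m) = l + mu := by
      rw [hl, hmu, hAm, hBm, hkc, pow_succ, pow_succ, pow_succ]; field_simp; ring
    have e3 : A (m+1) = C m + 2*l + mu - 4*(A m) := by
      rw [hl, hmu, hAm, hAm1, hCm, hkc, pow_succ, pow_succ, pow_succ, pow_succ]
      field_simp; ring
    have e4 : B (m+1) = -(s*(A m)) := by
      rw [hs, hAm, hBm1, pow_succ, pow_succ]; field_simp; ring
    have e5 : C (m+1) = l - s^2*(A m) := by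
      rw [hl, hs, hAm, hCm1, pow_succ, pow_succ]; field_simp; ring
    have key := key_step (w m) (w (m+1)) (w (m+2)) (A m) (B m) (C m)
      (A (m+1)) (B (m+1)) (C (m+1)) l mu s e1 e2 e3 e4 e5
    have hM : 0 ≤ ⟪w (m+1) - w (m+2), (w m - w (m+1)) - (w (m+1) - w (m+2))⟫ := by
      have := h1 (m+1) (m+2) (by omega) (by omega) (by omega)
      simpa using this
    have hS : 0 ≤ ⟪w (m+1), w m - w (m+1)⟫ := by
      have := h2 (m+1) (by omega) (by omega)
      simpa using this
    have hl0 : 0 ≤ l := by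
      rw [hl]; positivity
    have hmu0 : 0 ≤ mu := by
      rw [hmu]; positivity
    have hA0 : 0 ≤ A m := by
      rw [hAm]; positivity
    have hsq : 0 ≤ A m * ‖w m - (2:ℝ) • w (m+1) + s • w (m+2)‖^2 := by positivity
    have hlM : 0 ≤ l * ⟪w (m+1) - w (m+2), (w m - w (m+1)) - (w (m+1) - w (m+2))⟫ :=
      mul_nonneg hl0 hM
    have hmuS : 0 ≤ mu * ⟪w (m+1), w m - w (m+1)⟫ := mul_nonneg hmu0 hS
    rw [hT]
    simp only []
    linarith [key]
  have desc : ∀ m : ℕ, m ≤ N → T m ≤ T 0 := by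
    intro m hm
    induction m with
    | zero => exact le_refl _
    | succ n ih => exact (step n (by omega)).trans (ih (by omega))
  have hT0 : T 0 = (N:ℝ)^N/((N:ℝ)+1)^(N+1) * ‖w 0‖^2 := by
    rw [hT, hA, hB, hC]
    norm_num
  have hTN : ‖w N - w (N+1)‖^2 ≤ T N := by
    have hS : 0 ≤ ⟪w (N+1), w N - w (N+1)⟫ := by
      have := h2 (N+1) (by omega) (by omega)
      simpa using this
    have hTNeq : T N = ‖w N - w (N+1)‖^2 + (2/((N:ℝ)+1)) * ⟪w (N+1), w N - w (N+1)⟫ := by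
      rw [hT, hA, hB, hC]
      simp only [Nat.sub_self, pow_zero, zero_add, pow_one]
      simp only [← real_inner_self_eq_norm_sq, inner_sub_left, inner_sub_right]
      rw [real_inner_comm (w (N+1)) (w N)]
      field_simp
      ring
    rw [hTNeq]
    have : 0 ≤ (2/((N:ℝ)+1)) * ⟪w (N+1), w N - w (N+1)⟫ := by
      apply mul_nonneg (by positivity) hS
    linarith
  calc ‖w N - w (N+1)‖^2 ≤ T N := hTN
    _ ≤ T 0 := desc N (le_refl N)
    _ = (N:ℝ)^N/((N:ℝ)+1)^(N+1) * ‖w 0‖^2 := hT0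
    _ = (N:ℝ)^N/((N:ℝ)+1)^(N+1) := by rw [h0]; norm_num
end
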